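/- arXiv:1401.6734 — 2 statements merged into one kernel-verified Lean document; each statement's English description precedes it below -/
import Mathlib

section
/- Let k ≥ 2, m be positive integers and let c be an m-good edge-coloring of the complete k-uniform hypergraph on an n-element vertex set V (meaning every (k-1)-element subset of V is contained in at most m edges of any particular color). For 0 ≤ s ≤ k-1, let A_s denote the number of unordered pairs {e₁, e₂} of distinct k-element subsets of V with c(e₁) = c(e₂) and |e₁ ∩ e₂| = s. Then A_s ≤ m · n^(2k-s-1) / (2 · s! · ((k-s)!)²). -/
/-!
Double count the triples `(e₁, e₂, S)` with `S` a `(k-1)`-set and `e₁ ∩ e₂ ⊆ S ⊆ e₂`. An ordered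
pair of same-coloured edges meeting in `s` vertices has `k - s` such `S` (delete a vertex of
`e₂ \ e₁`), while for fixed `e₁` and `S` goodness leaves at most `m` edges `e₂ ⊇ S` of colour
`c e₁`, and there are at most `C(n,k) C(k,s) C(n-k,k-1-s)` pairs `(e₁, S)` with `|e₁ ∩ S| = s`.
Finally `C(n,k) k! ≤ n^k` and `C(n-k,j) j! ≤ n^j`.
-/

open Finset

open Nat in
theorem Nat.choose_mul_choose_mul_choose_mul_factorial_le {n k s : ℕ} (hsk : s < k) :
    n.choose k * (k.choose s * (n - k).choose (k - 1 - s)) * (s ! * (k - s)! ^ 2) ≤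
      n ^ (2 * k - s - 1) * (k - s) := by
  have hfirst : n.choose k * k ! ≤ n ^ k :=
    mul_comm k ! _ ▸ descFactorial_eq_factorial_mul_choose n k ▸ descFactorial_le_pow n k
  have hsecond : (n - k).choose (k - 1 - s) * (k - 1 - s)! ≤ n ^ (k - 1 - s) :=
    mul_comm (k - 1 - s)! _ ▸ descFactorial_eq_factorial_mul_choose (n - k) (k - 1 - s) ▸
      (descFactorial_le_pow _ _).trans (Nat.pow_le_pow_left (n.sub_le k) _)
  have hfact : (k - s)! = (k - s) * (k - 1 - s)! := by
    rw [show k - s = k - 1 - s + 1 by omega, factorial_succ]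
  calc _ = n.choose k * (k.choose s * s ! * (k - s)!) * ((n - k).choose (k - 1 - s) * (k - 1 - s)!)
        * (k - s) := by rw [hfact]; ring
    _ = n.choose k * k ! * ((n - k).choose (k - 1 - s) * (k - 1 - s)!) * (k - s) := by
        rw [choose_mul_factorial_mul_factorial hsk.le]
    _ ≤ n ^ k * n ^ (k - 1 - s) * (k - s) := by gcongr
    _ = n ^ (2 * k - s - 1) * (k - s) := by rw [← pow_add]; congr 2; omega

section

variable {V C : Type*} [Fintype V] [DecidableEq V]

theorem card_filter_card_inter_eq_le (e : Finset V) (j s : ℕ) :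
    #{S ∈ powersetCard j univ | #(e ∩ S) = s} ≤
      (#e).choose s * (Fintype.card V - #e).choose (j - s) := by
  rw [← card_powersetCard s e, ← card_compl e, ← card_powersetCard, ← card_product]
  refine card_le_card_of_injOn (fun S => (e ∩ S, S \ e)) (fun S hS => ?_) fun S _ T _ hST => ?_
  · simp only [mem_coe, mem_filter, mem_powersetCard_univ] at hS
    simp only [mem_coe, mem_product, mem_powersetCard]
    refine ⟨⟨inter_subset_left, hS.2⟩, fun x hx => mem_compl.mpr (mem_sdiff.mp hx).2, ?_⟩
    rw [card_sdiff, hS.1, hS.2]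
  · simp only [Prod.mk.injEq] at hST
    rw [← sdiff_union_inter S e, ← sdiff_union_inter T e, inter_comm S, inter_comm T, hST.1, hST.2]

variable [DecidableEq C]

def IsGoodColoring (k m : ℕ) (c : Finset V → C) : Prop :=
  ∀ S : Finset V, S.card = k - 1 → ∀ γ : C,
    ((powersetCard k (univ : Finset V)).filter (fun e => S ⊆ e ∧ c e = γ)).card ≤ m

namespace IsGoodColoring

variable {k m : ℕ} {c : Finset V → C}

theorem card_filter_color_inter_mul_le (hc : IsGoodColoring k m c) (e : Finset V) (γ : C)
    (s : ℕ) :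
    #{f ∈ powersetCard k univ | c f = γ ∧ #(e ∩ f) = s} * (k - s) ≤
      #{S ∈ powersetCard (k - 1) univ | #(e ∩ S) = s} * m := by
  refine card_mul_le_card_mul (fun f S => S ⊆ f) (fun f hf => ?_) fun S hS => ?_
  · simp only [mem_filter, mem_powersetCard_univ] at hf
    have hdiff : #(f \ e) = k - s := by rw [card_sdiff, hf.1, hf.2.2]
    rw [← hdiff, ← card_image_of_injOn ((erase_injOn f).mono sdiff_subset)]
    refine card_le_card fun S hS => ?_
    obtain ⟨x, hx, rfl⟩ := mem_image.mp hS
    rw [mem_sdiff] at hx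
    simp only [bipartiteAbove, mem_filter, mem_powersetCard_univ]
    refine ⟨⟨?_, ?_⟩, erase_subset x f⟩
    · rw [card_erase_of_mem hx.1, hf.1]
    · rw [inter_erase, erase_eq_of_notMem (fun h => hx.2 (mem_inter.mp h).1), hf.2.2]
  · simp only [mem_filter, mem_powersetCard_univ] at hS
    refine le_trans (card_le_card fun f hf => ?_) (hc S hS.1 γ)
    simp only [bipartiteBelow, mem_filter, mem_powersetCard_univ] at hf ⊢
    exact ⟨hf.1.1, hf.2, hf.1.2.1⟩

theorem card_pairs_color_inter_mul_le (hc : IsGoodColoring k m c) (s : ℕ) :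
    #{p ∈ powersetCard k univ ×ˢ powersetCard k univ |
        p.1 ≠ p.2 ∧ c p.1 = c p.2 ∧ #(p.1 ∩ p.2) = s} * (k - s) ≤
      (Fintype.card V).choose k * (k.choose s * (Fintype.card V - k).choose (k - 1 - s) * m) := by
  set U := powersetCard k (univ : Finset V)
  have hpairs : #{p ∈ U ×ˢ U | p.1 ≠ p.2 ∧ c p.1 = c p.2 ∧ #(p.1 ∩ p.2) = s} ≤
      ∑ e ∈ U, #{f ∈ U | c f = c e ∧ #(e ∩ f) = s} := by
    calc _ ≤ #{p ∈ U ×ˢ U | c p.2 = c p.1 ∧ #(p.1 ∩ p.2) = s} :=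
          card_le_card (monotone_filter_right _ fun p _ h => ⟨h.2.1.symm, h.2.2⟩)
      _ = _ := by simp only [card_filter, sum_product]
  have hU : #U = (Fintype.card V).choose k := by rw [card_powersetCard, card_univ]
  calc _ ≤ (∑ e ∈ U, #{f ∈ U | c f = c e ∧ #(e ∩ f) = s}) * (k - s) := by gcongr
    _ ≤ ∑ e ∈ U, #{S ∈ powersetCard (k - 1) univ | #(e ∩ S) = s} * m := by
      rw [sum_mul]; exact sum_le_sum fun e _ => hc.card_filter_color_inter_mul_le e (c e) s
    _ ≤ ∑ _e ∈ U, k.choose s * (Fintype.card V - k).choose (k - 1 - s) * m := by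
      refine sum_le_sum fun e he => ?_
      have he : #e = k := mem_powersetCard_univ.mp he
      simpa only [he] using Nat.mul_le_mul_right m (card_filter_card_inter_eq_le e (k - 1) s)
    _ = _ := by rw [sum_const, hU, smul_eq_mul]

open Nat in
theorem card_pairs_color_inter_mul_factorial_le (hc : IsGoodColoring k m c) {s : ℕ} (hsk : s < k) :
    #{p ∈ powersetCard k univ ×ˢ powersetCard k univ |
        p.1 ≠ p.2 ∧ c p.1 = c p.2 ∧ #(p.1 ∩ p.2) = s} * (s ! * (k - s)! ^ 2) ≤
      m * Fintype.card V ^ (2 * k - s - 1) := by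
  set n := Fintype.card V
  refine Nat.le_of_mul_le_mul_right ?_ (Nat.sub_pos_of_lt hsk)
  calc _ = _ * (k - s) * (s ! * (k - s)! ^ 2) := by ring
    _ ≤ n.choose k * (k.choose s * (n - k).choose (k - 1 - s) * m) * (s ! * (k - s)! ^ 2) :=
        Nat.mul_le_mul_right _ (hc.card_pairs_color_inter_mul_le s)
    _ = m * (n.choose k * (k.choose s * (n - k).choose (k - 1 - s)) * (s ! * (k - s)! ^ 2)) := by
        ring
    _ ≤ m * (n ^ (2 * k - s - 1) * (k - s)) :=
        Nat.mul_le_mul_left m (Nat.choose_mul_choose_mul_choose_mul_factorial_le hsk)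
    _ = _ := by ring

end IsGoodColoring

end

theorem stmt_1_general {V C : Type*} [Fintype V] [DecidableEq V] [DecidableEq C]
    (k m s : ℕ) (hk : 2 ≤ k) (hs : s ≤ k - 1)
    (c : Finset V → C)
    (hgood : ∀ S : Finset V, S.card = k - 1 → ∀ γ : C,
      ((Finset.powersetCard k (Finset.univ : Finset V)).filter
        (fun e => S ⊆ e ∧ c e = γ)).card ≤ m) :
    ((((Finset.powersetCard k (Finset.univ : Finset V)) ×ˢ
        (Finset.powersetCard k (Finset.univ : Finset V))).filter
        (fun p => p.1 ≠ p.2 ∧ c p.1 = c p.2 ∧ (p.1 ∩ p.2).card = s)).card : ℝ) / 2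
      ≤ (m : ℝ) * (Fintype.card V : ℝ) ^ (2 * k - s - 1) /
          (2 * (Nat.factorial s : ℝ) * ((Nat.factorial (k - s) : ℝ)) ^ 2) := by
  have hcount : (_ : ℝ) ≤ _ := Nat.cast_le.mpr
    (IsGoodColoring.card_pairs_color_inter_mul_factorial_le (c := c) hgood (by omega : s < k))
  push_cast at hcount
  rw [div_le_div_iff₀ two_pos (by positivity)]
  linarith

/-- The number of unordered pairs of distinct same-color edges intersecting in `s`
vertices is half the number of such ordered pairs. -/
theorem stmt_1 {V C : Type*} [Fintype V] [DecidableEq V] [DecidableEq C]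
    (k m s : ℕ) (hk : 2 ≤ k) (hm : 1 ≤ m) (hs : s ≤ k - 1)
    (c : Finset V → C)
    (hgood : ∀ S : Finset V, S.card = k - 1 → ∀ γ : C,
      ((Finset.powersetCard k (Finset.univ : Finset V)).filter
        (fun e => S ⊆ e ∧ c e = γ)).card ≤ m) :
    ((((Finset.powersetCard k (Finset.univ : Finset V)) ×ˢ
        (Finset.powersetCard k (Finset.univ : Finset V))).filter
        (fun p => p.1 ≠ p.2 ∧ c p.1 = c p.2 ∧ (p.1 ∩ p.2).card = s)).card : ℝ) / 2
      ≤ (m : ℝ) * (Fintype.card V : ℝ) ^ (2 * k - s - 1) /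
          (2 * (Nat.factorial s : ℝ) * ((Nat.factorial (k - s) : ℝ)) ^ 2) :=
  stmt_1_general k m s hk hs c hgood
end

section
/- Let d ≥ 2 and t ≥ d+1 be integers, and let P be a set of n ≥ 4·d·t^(2d+2) points in ℝ^d such that no d+1 points of P lie on a common hyperplane (affine subspace of dimension d-1). Then there exists a subset S ⊆ P with |S| ≥ t such that all binom(t, d+1) simplices spanned by (d+1)-element subsets of S have pairwise distinct volumes. -/
/-!
Greedy construction. Suppose the `(d+1)`-subsets of `S ⊆ P` span simplices of pairwise distinct
volumes and `p ∈ P \ S`. A coincidence among the simplices of `S ∪ {p}` forces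
`vol (p ∪ B₁) = vol (p ∪ B₂)` for distinct `d`-subsets `B₁ ≠ B₂` of `S`, or `vol (p ∪ B) = vol e`
for a `d`-subset `B` and a `(d+1)`-subset `e` of `S`. In homogeneous coordinates `d! · vol (p ∪ B)`
is `|ℓ (1, p)|` for a linear functional `ℓ` (a row expansion of a determinant), so each condition
reads `|ℓ₁ (1, p)| = |ℓ₂ (1, p)|` with `ℓ₁ ≠ ± ℓ₂`: `p` lies on one of two hyperplanes, each of
which contains at most `d` points of `P`. Hence at most `|S| + 2d (|S|^(2d) + |S|^(2d+1))` points
of `P` are excluded, fewer than `|P|` as long as `|S| < t`.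
-/

/-- Volume of the simplex spanned by a set of `d+1` points in `ℝ^d`. -/
noncomputable def simplexVolume {d : ℕ} (s : Finset (EuclideanSpace ℝ (Fin d))) : ℝ :=
  sSup {v : ℝ | ∃ f : Fin (d + 1) → EuclideanSpace ℝ (Fin d),
    Set.range f = ↑s ∧
    v = |Matrix.det (Matrix.of fun i j : Fin d => (f i.succ - f 0) j)| /
          (Nat.factorial d)}

open Finset Function Matrix

section Combinatorics

variable {α : Type*} {n : ℕ}

theorem Finset.exists_injective_range_eq {s : Finset α} (hs : #s = n) :
    ∃ f : Fin n → α, Injective f ∧ Set.range f = s :=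
  ⟨fun i => (s.equivFinOfCardEq hs).symm i,
    Subtype.val_injective.comp (s.equivFinOfCardEq hs).symm.injective, by
      rw [Set.range_comp', Equiv.range_eq_univ, Set.image_univ, Subtype.range_coe]⟩

theorem Finset.injective_of_range_eq {s : Finset α} (hs : #s = n) {f : Fin n → α}
    (hf : Set.range f = s) : Injective f := by
  classical
  have himage : univ.image f = s := coe_injective (by simpa using hf)
  have hinj : Set.InjOn f (univ : Finset (Fin n)) :=
    card_image_iff.1 (by rw [himage, hs, card_univ, Fintype.card_fin])
  exact Set.injOn_univ.1 (by simpa using hinj)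

theorem exists_perm_comp_eq {f g : Fin n → α} (hf : Injective f) (hg : Injective g)
    (h : Set.range f = Set.range g) : ∃ σ : Equiv.Perm (Fin n), f ∘ σ = g :=
  ⟨(Equiv.ofInjective g hg).trans ((Equiv.setCongr h.symm).trans (Equiv.ofInjective f hf).symm),
    funext fun i => by simp [Equiv.apply_ofInjective_symm]⟩

theorem Set.InjOn.powersetCard_succ_insert {α β : Type*} [DecidableEq α] {f : Finset α → β}
    {S : Finset α} {a : α} (ha : a ∉ S) {k : ℕ} (hS : Set.InjOn f (S.powersetCard (k + 1)))
    (hins : Set.InjOn (fun B => f (insert a B)) (S.powersetCard k))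
    (hsep : ∀ B ∈ S.powersetCard k, ∀ e ∈ S.powersetCard (k + 1), f (insert a B) ≠ f e) :
    Set.InjOn f ((insert a S).powersetCard (k + 1)) := by
  have hdisj : Disjoint (S.powersetCard (k + 1) : Set (Finset α))
      ((S.powersetCard k).image (insert a) : Set (Finset α)) := by
    refine Set.disjoint_left.2 fun e he he' => ?_
    obtain ⟨B, -, rfl⟩ := Finset.mem_image.1 he'
    exact ha ((mem_powersetCard.1 he).1 (mem_insert_self a B))
  rw [Finset.powersetCard_succ_insert ha, Finset.coe_union, Set.injOn_union hdisj,
    Finset.coe_image]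
  exact ⟨hS, hins.image_of_comp, fun e he _ ⟨B, hB, hBe⟩ => hBe ▸ (hsep B hB e he).symm⟩

end Combinatorics

theorem add_two_mul_mul_pow_lt {d t m : ℕ} (hd : 1 ≤ d) (ht : 2 ≤ t) (hmt : m ≤ t) :
    m + 2 * d * (m ^ (2 * d) + m ^ (2 * d + 1)) < 4 * d * t ^ (2 * d + 2) := by
  have hu : 1 ≤ t ^ (2 * d) := Nat.one_le_pow _ _ (by omega)
  calc m + 2 * d * (m ^ (2 * d) + m ^ (2 * d + 1))
      ≤ t + 2 * d * (t ^ (2 * d) + t ^ (2 * d) * t) := by rw [pow_succ]; gcongr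
    _ ≤ t ^ (2 * d) * t + 2 * d * (t ^ (2 * d) * t + t ^ (2 * d) * t) := by
        gcongr
        · exact Nat.le_mul_of_pos_left t hu
        · exact Nat.le_mul_of_pos_right _ (by omega)
    _ = t ^ (2 * d) * t * (4 * d + 1) := by ring
    _ < t ^ (2 * d) * t * (4 * d * t) := by
        gcongr
        nlinarith
    _ = 4 * d * t ^ (2 * d + 2) := by ring

section Geometry

variable {d : ℕ}

local notation "𝔼" => EuclideanSpace ℝ (Fin d)

def homCoords (x : 𝔼) : Fin (d + 1) → ℝ := Fin.cons 1 fun j => x j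

def homDet (f : Fin (d + 1) → 𝔼) : ℝ := det (of fun i => homCoords (f i))

theorem homDet_eq_det_sub (f : Fin (d + 1) → 𝔼) :
    homDet f = det (of fun i j : Fin d => (f i.succ - f 0) j) := by
  have hrows : homDet f = det (of (Fin.cons (homCoords (f 0))
      fun i => Fin.cons 0 fun j => (f i.succ - f 0) j)) := by
    unfold homDet
    refine det_eq_of_forall_row_eq_smul_add_const (Fin.cons 0 fun _ => (1 : ℝ)) 0
      (Fin.cons_zero _ _) fun i j => ?_
    refine Fin.cases ?_ (fun i => ?_) i
    · simp
    · refine Fin.cases ?_ (fun j => ?_) j <;> simp [homCoords]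
  rw [hrows, det_succ_column_zero, Fin.sum_univ_succ]
  simp [homCoords]
  rfl

theorem abs_homDet_comp_perm (f : Fin (d + 1) → 𝔼) (σ : Equiv.Perm (Fin (d + 1))) :
    |homDet (f ∘ σ)| = |homDet f| :=
  abs_det_submatrix_equiv_equiv σ (Equiv.refl _) (of fun i => homCoords (f i))

theorem simplexVolume_eq_abs_homDet {s : Finset 𝔼} (hs : #s = d + 1) {f : Fin (d + 1) → 𝔼}
    (hf : Set.range f = s) : simplexVolume s = |homDet f| / d.factorial := by
  suffices h : {v : ℝ | ∃ g : Fin (d + 1) → 𝔼, Set.range g = s ∧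
      v = |det (of fun i j : Fin d => (g i.succ - g 0) j)| / d.factorial}
      = {|homDet f| / d.factorial} by
    rw [simplexVolume, h, csSup_singleton]
  ext v
  refine ⟨?_, fun hv => ⟨f, hf, by rw [hv, homDet_eq_det_sub]⟩⟩
  rintro ⟨g, hg, rfl⟩
  obtain ⟨σ, rfl⟩ := exists_perm_comp_eq (s.injective_of_range_eq hs hf)
    (s.injective_of_range_eq hs hg) (hf.trans hg.symm)
  rw [← homDet_eq_det_sub, abs_homDet_comp_perm, Set.mem_singleton_iff]

theorem homDet_ne_zero_of_affineSpan_eq_top {f : Fin (d + 1) → 𝔼}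
    (hf : affineSpan ℝ (Set.range f) = ⊤) : homDet f ≠ 0 := by
  set v : Fin d → 𝔼 := fun i => f i.succ - f 0
  have hspan : Submodule.span ℝ (Set.range v) = ⊤ := by
    have h := AffineSubspace.vectorSpan_eq_top_of_affineSpan_eq_top ℝ _ _ hf
    rwa [vectorSpan_range_eq_span_range_vsub_right ℝ f 0,
      ← Fin.cons_self_tail (fun i => f i -ᵥ f 0), Fin.range_cons, vsub_self,
      Submodule.span_insert_zero] at h
  have hli : LinearIndependent ℝ v :=
    linearIndependent_of_top_le_span_of_card_eq_finrank hspan.ge (by simp)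
  have hunit := ((EuclideanSpace.basisFun (Fin d) ℝ).toBasis.is_basis_iff_det).1 ⟨hli, hspan⟩
  rw [Module.Basis.det_apply] at hunit
  rw [homDet_eq_det_sub, ← det_transpose]
  convert hunit.ne_zero
  ext i j
  simp [Module.Basis.toMatrix_apply, v]

def InGeneralPosition (P : Finset 𝔼) : Prop :=
  ∀ s ∈ P.powersetCard (d + 1), affineSpan ℝ (s : Set 𝔼) = ⊤

/-- `v ↦ det [v; (1, g 0); …; (1, g (d - 1))]`, the expansion along the first row. -/
def detForm (g : Fin d → 𝔼) : Module.Dual ℝ (Fin (d + 1) → ℝ) :=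
  (detRowAlternating : (Fin (d + 1) → ℝ) [⋀^Fin (d + 1)]→ₗ[ℝ] ℝ).toMultilinearMap.toLinearMap
    (Fin.cons 0 (homCoords ∘ g)) 0

theorem detForm_homCoords (g : Fin d → 𝔼) (p : 𝔼) :
    detForm g (homCoords p) = homDet (Fin.cons p g) := by
  rw [detForm, MultilinearMap.toLinearMap_apply, Fin.update_cons_zero, ← Fin.comp_cons]
  rfl

theorem homDet_cons_self (g : Fin d → 𝔼) (i : Fin d) : homDet (Fin.cons (g i) g) = 0 :=
  det_zero_of_row_eq (Fin.succ_ne_zero i).symm rfl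

variable {P : Finset (EuclideanSpace ℝ (Fin d))}

theorem InGeneralPosition.homDet_ne_zero (hP : InGeneralPosition P) {f : Fin (d + 1) → 𝔼}
    (hf : Injective f) (hfP : ∀ i, f i ∈ P) : homDet f ≠ 0 := by
  classical
  apply homDet_ne_zero_of_affineSpan_eq_top
  have h := hP (univ.image f) <| mem_powersetCard.2
    ⟨by simpa [subset_iff], by rw [card_image_of_injective _ hf, card_univ, Fintype.card_fin]⟩
  simpa using h

theorem InGeneralPosition.card_filter_eq_zero_le (hP : InGeneralPosition P)
    {ℓ : Module.Dual ℝ (Fin (d + 1) → ℝ)} (hℓ : ℓ ≠ 0) :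
    #{p ∈ P | ℓ (homCoords p) = 0} ≤ d := by
  by_contra! h
  obtain ⟨T, hT, hTcard⟩ := exists_subset_card_eq h
  obtain ⟨f, hf, hfT⟩ := T.exists_injective_range_eq hTcard
  have hfT' : ∀ i, f i ∈ T := fun i => mem_coe.1 (hfT ▸ Set.mem_range_self i)
  have hdet := hP.homDet_ne_zero hf fun i => (mem_filter.1 (hT (hfT' i))).1
  -- the homogeneous coordinates of `d + 1` points in general position form a basis
  have hspan : Submodule.span ℝ (Set.range (homCoords ∘ f)) = ⊤ :=
    (linearIndependent_rows_of_det_ne_zero hdet).span_eq_top_of_card_eq_finrank (by simp)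
  exact hℓ (LinearMap.ext_on_range hspan fun i => (mem_filter.1 (hT (hfT' i))).2)

theorem InGeneralPosition.card_filter_abs_eq_abs_le (hP : InGeneralPosition P)
    {ℓ₁ ℓ₂ : Module.Dual ℝ (Fin (d + 1) → ℝ)} (h₁ : ℓ₁ ≠ ℓ₂) (h₂ : ℓ₁ ≠ -ℓ₂) :
    #{p ∈ P | |ℓ₁ (homCoords p)| = |ℓ₂ (homCoords p)|} ≤ 2 * d := by
  calc #{p ∈ P | |ℓ₁ (homCoords p)| = |ℓ₂ (homCoords p)|}
      ≤ #({p ∈ P | (ℓ₁ - ℓ₂) (homCoords p) = 0} ∪ {p ∈ P | (ℓ₁ + ℓ₂) (homCoords p) = 0}) := by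
        refine card_le_card fun p hp => ?_
        simp only [mem_filter, mem_union, LinearMap.sub_apply, LinearMap.add_apply] at hp ⊢
        rcases abs_eq_abs.1 hp.2 with h | h
        · exact .inl ⟨hp.1, sub_eq_zero.2 h⟩
        · exact .inr ⟨hp.1, by rw [h, neg_add_cancel]⟩
    _ ≤ d + d := (card_union_le _ _).trans <| add_le_add
        (hP.card_filter_eq_zero_le (sub_ne_zero.2 h₁))
        (hP.card_filter_eq_zero_le fun h => h₂ (eq_neg_of_add_eq_zero_left h))
    _ = 2 * d := (two_mul d).symm

theorem simplexVolume_insert {B : Finset 𝔼} (hB : #B = d) {g : Fin d → 𝔼}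
    (hg : Set.range g = B) {p : 𝔼} (hp : p ∉ B) :
    simplexVolume (insert p B) = |detForm g (homCoords p)| / d.factorial := by
  rw [detForm_homCoords]
  exact simplexVolume_eq_abs_homDet (by rw [card_insert_of_notMem hp, hB])
    (by rw [Fin.range_cons, hg, coe_insert])

theorem InGeneralPosition.detForm_ne_smul_detForm (hP : InGeneralPosition P)
    {g₁ g₂ : Fin d → 𝔼} (hg₁ : Injective g₁) (hg₁P : ∀ i, g₁ i ∈ P) {i : Fin d}
    (hiP : g₂ i ∈ P) (hi : g₂ i ∉ Set.range g₁) (c : ℝ) : detForm g₁ ≠ c • detForm g₂ := by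
  intro h
  have h₀ := LinearMap.congr_fun h (homCoords (g₂ i))
  rw [LinearMap.smul_apply, detForm_homCoords, detForm_homCoords, homDet_cons_self,
    smul_zero] at h₀
  exact hP.homDet_ne_zero (Fin.cons_injective_of_injective hi hg₁)
    (Fin.forall_fin_succ.2 ⟨hiP, hg₁P⟩) h₀

theorem InGeneralPosition.detForm_ne_smul_proj (hP : InGeneralPosition P) (hd : 0 < d)
    {g : Fin d → 𝔼} (hg : Injective g) (hgP : ∀ i, g i ∈ P) {q : 𝔼} (hqP : q ∈ P)
    (hq : q ∉ Set.range g) (c : ℝ) : detForm g ≠ c • LinearMap.proj 0 := by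
  intro h
  have hproj (x : 𝔼) : (c • LinearMap.proj 0 : Module.Dual ℝ _) (homCoords x) = c := by
    simp [homCoords]
  have h₀ := LinearMap.congr_fun h (homCoords (g ⟨0, hd⟩))
  have hq₀ := LinearMap.congr_fun h (homCoords q)
  rw [detForm_homCoords, homDet_cons_self, hproj] at h₀
  rw [detForm_homCoords, hproj] at hq₀
  exact hP.homDet_ne_zero (Fin.cons_injective_of_injective hq hg)
    (Fin.forall_fin_succ.2 ⟨hqP, hgP⟩) (hq₀.trans h₀.symm)

theorem InGeneralPosition.card_filter_simplexVolume_insert_eq_insert_le (hP : InGeneralPosition P)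
    {B₁ B₂ : Finset 𝔼} (hB₁P : B₁ ⊆ P) (hB₂P : B₂ ⊆ P) (hB₁ : #B₁ = d) (hB₂ : #B₂ = d)
    (hne : B₁ ≠ B₂) :
    #{p ∈ P \ (B₁ ∪ B₂) | simplexVolume (insert p B₁) = simplexVolume (insert p B₂)} ≤ 2 * d := by
  obtain ⟨g₁, hg₁, hg₁B⟩ := B₁.exists_injective_range_eq hB₁
  obtain ⟨g₂, -, hg₂B⟩ := B₂.exists_injective_range_eq hB₂
  obtain ⟨x, hx₂, hx₁⟩ : ∃ x ∈ B₂, x ∉ B₁ := not_subset.1 fun h =>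
    hne (eq_of_subset_of_card_le h (hB₁.trans hB₂.symm).le).symm
  obtain ⟨i, rfl⟩ : x ∈ Set.range g₂ := hg₂B ▸ mem_coe.2 hx₂
  have hform (c : ℝ) : detForm g₁ ≠ c • detForm g₂ :=
    hP.detForm_ne_smul_detForm hg₁ (fun j => hB₁P (mem_coe.1 (hg₁B ▸ Set.mem_range_self j)))
      (hB₂P hx₂) (by rwa [hg₁B, mem_coe]) c
  refine (card_le_card fun p hp => ?_).trans (hP.card_filter_abs_eq_abs_le
    (fun h => hform 1 (h.trans (one_smul ℝ _).symm))
    (fun h => hform (-1) (h.trans (neg_one_smul ℝ _).symm)))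
  simp only [mem_filter, mem_sdiff, mem_union, not_or] at hp ⊢
  obtain ⟨⟨hpP, hp₁, hp₂⟩, hvol⟩ := hp
  rw [simplexVolume_insert hB₁ hg₁B hp₁, simplexVolume_insert hB₂ hg₂B hp₂,
    div_left_inj' (by positivity)] at hvol
  exact ⟨hpP, hvol⟩

theorem InGeneralPosition.card_filter_simplexVolume_insert_eq_le (hP : InGeneralPosition P)
    (hd : 0 < d) {B e : Finset 𝔼} (hBP : B ⊆ P) (hB : #B = d) (he : #e = d + 1) :
    #{p ∈ P \ B | simplexVolume (insert p B) = simplexVolume e} ≤ 2 * d := by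
  obtain ⟨g, hg, hgB⟩ := B.exists_injective_range_eq hB
  obtain ⟨f, -, hfe⟩ := e.exists_injective_range_eq he
  rcases (P \ B).eq_empty_or_nonempty with hPB | ⟨q, hq⟩
  · simp [hPB]
  rw [mem_sdiff] at hq
  have hform (c : ℝ) : detForm g ≠ c • LinearMap.proj 0 :=
    hP.detForm_ne_smul_proj hd hg (fun j => hBP (mem_coe.1 (hgB ▸ Set.mem_range_self j))) hq.1
      (by rw [hgB, mem_coe]; exact hq.2) c
  refine (card_le_card fun p hp => ?_).trans (hP.card_filter_abs_eq_abs_le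
    (ℓ₂ := homDet f • LinearMap.proj 0) (hform _)
    (fun h => hform (-homDet f) (h.trans (neg_smul _ _).symm)))
  simp only [mem_filter, mem_sdiff] at hp ⊢
  obtain ⟨⟨hpP, hpB⟩, hvol⟩ := hp
  rw [simplexVolume_insert hB hgB hpB, simplexVolume_eq_abs_homDet he hfe,
    div_left_inj' (by positivity)] at hvol
  simpa [homCoords] using ⟨hpP, hvol⟩

def HasDistinctSimplexVolumes (S : Finset 𝔼) : Prop :=
  Set.InjOn simplexVolume (S.powersetCard (d + 1) : Set (Finset 𝔼))

theorem InGeneralPosition.exists_hasDistinctSimplexVolumes_insert (hP : InGeneralPosition P)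
    (hd : 0 < d) {S : Finset 𝔼} (hSP : S ⊆ P)
    (hS : HasDistinctSimplexVolumes S)
    (hcard : #S + 2 * d * (#S ^ (2 * d) + #S ^ (2 * d + 1)) < #P) :
    ∃ p ∈ P, p ∉ S ∧ HasDistinctSimplexVolumes (insert p S) := by
  have hsub {k} {B} (hB : B ∈ S.powersetCard k) : B ⊆ P ∧ #B = k :=
    ⟨(mem_powersetCard.1 hB).1.trans hSP, (mem_powersetCard.1 hB).2⟩
  set bad₁ := (S.powersetCard d).offDiag.biUnion fun q =>
    {p ∈ P \ (q.1 ∪ q.2) | simplexVolume (insert p q.1) = simplexVolume (insert p q.2)}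
  set bad₂ := (S.powersetCard d ×ˢ S.powersetCard (d + 1)).biUnion fun q =>
    {p ∈ P \ q.1 | simplexVolume (insert p q.1) = simplexVolume q.2}
  have hchoose (k) : #(S.powersetCard k) ≤ #S ^ k := by
    rw [card_powersetCard]; exact Nat.choose_le_pow _ _
  have hbad₁ : #bad₁ ≤ #S ^ (2 * d) * (2 * d) := by
    refine card_biUnion_le_card_mul _ _ _ (fun q hq => ?_) |>.trans (Nat.mul_le_mul_right _ ?_)
    · obtain ⟨hq₁, hq₂, hne⟩ := mem_offDiag.1 hq
      exact hP.card_filter_simplexVolume_insert_eq_insert_le (hsub hq₁).1 (hsub hq₂).1 (hsub hq₁).2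
        (hsub hq₂).2 hne
    · calc #(S.powersetCard d).offDiag ≤ #(S.powersetCard d) * #(S.powersetCard d) := by
            rw [offDiag_card]; exact Nat.sub_le _ _
        _ ≤ #S ^ d * #S ^ d := Nat.mul_le_mul (hchoose d) (hchoose d)
        _ = #S ^ (2 * d) := by ring
  have hbad₂ : #bad₂ ≤ #S ^ (2 * d + 1) * (2 * d) := by
    refine card_biUnion_le_card_mul _ _ _ (fun q hq => ?_) |>.trans (Nat.mul_le_mul_right _ ?_)
    · obtain ⟨hq₁, hq₂⟩ := mem_product.1 hq
      exact hP.card_filter_simplexVolume_insert_eq_le hd (hsub hq₁).1 (hsub hq₁).2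
        (hsub hq₂).2
    · calc #(S.powersetCard d ×ˢ S.powersetCard (d + 1))
          = #(S.powersetCard d) * #(S.powersetCard (d + 1)) := card_product _ _
        _ ≤ #S ^ d * #S ^ (d + 1) := Nat.mul_le_mul (hchoose d) (hchoose (d + 1))
        _ = #S ^ (2 * d + 1) := by ring
  obtain ⟨p, hpP, hp⟩ : ∃ p ∈ P, p ∉ S ∪ bad₁ ∪ bad₂ := by
    refine exists_mem_notMem_of_card_lt_card (lt_of_le_of_lt ?_ hcard)
    refine (card_union_le _ _).trans (add_le_add (card_union_le _ _) hbad₂) |>.trans ?_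
    linarith
  simp only [mem_union, not_or] at hp
  obtain ⟨⟨hpS, hp₁⟩, hp₂⟩ := hp
  refine ⟨p, hpP, hpS, Set.InjOn.powersetCard_succ_insert hpS hS ?_ ?_⟩
  · intro B₁ hB₁ B₂ hB₂ hvol
    by_contra hne
    refine hp₁ (mem_biUnion.2 ⟨(B₁, B₂), mem_offDiag.2 ⟨hB₁, hB₂, hne⟩, mem_filter.2 ⟨?_, hvol⟩⟩)
    exact mem_sdiff.2 ⟨hpP, by
      simpa [not_or] using ⟨fun h => hpS ((mem_powersetCard.1 hB₁).1 h),
        fun h => hpS ((mem_powersetCard.1 hB₂).1 h)⟩⟩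
  · intro B hB e he hvol
    refine hp₂ (mem_biUnion.2 ⟨(B, e), mem_product.2 ⟨hB, he⟩, mem_filter.2 ⟨?_, hvol⟩⟩)
    exact mem_sdiff.2 ⟨hpP, fun h => hpS ((mem_powersetCard.1 hB).1 h)⟩

theorem InGeneralPosition.exists_hasDistinctSimplexVolumes (hP : InGeneralPosition P)
    (hd : 0 < d) {t : ℕ}
    (hbound : ∀ m < t, m + 2 * d * (m ^ (2 * d) + m ^ (2 * d + 1)) < #P) :
    ∃ S ⊆ P, #S = t ∧ HasDistinctSimplexVolumes S := by
  induction t with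
  | zero => exact ⟨∅, empty_subset _, card_empty, (powersetCard_empty_subsingleton _).injOn _⟩
  | succ t ih =>
    obtain ⟨S, hSP, rfl, hS⟩ := ih fun m hm => hbound m (Nat.lt_succ_of_lt hm)
    obtain ⟨p, hpP, hpS, hp⟩ :=
      hP.exists_hasDistinctSimplexVolumes_insert hd hSP hS (hbound _ (Nat.lt_succ_self _))
    exact ⟨insert p S, insert_subset hpP hSP, card_insert_of_notMem hpS, hp⟩

end Geometry

theorem stmt_10 (d t n : ℕ) (hd : 2 ≤ d) (ht : d + 1 ≤ t)
    (P : Finset (EuclideanSpace ℝ (Fin d))) (hP : P.card = n)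
    (hn : 4 * d * t ^ (2 * d + 2) ≤ n)
    (hgen : ∀ s ∈ Finset.powersetCard (d + 1) P,
      affineSpan ℝ (s : Set (EuclideanSpace ℝ (Fin d))) = ⊤) :
    ∃ S ⊆ P, t ≤ S.card ∧
      ∀ e₁ ∈ Finset.powersetCard (d + 1) S, ∀ e₂ ∈ Finset.powersetCard (d + 1) S,
        simplexVolume e₁ = simplexVolume e₂ → e₁ = e₂ := by
  obtain ⟨S, hSP, hS, hdist⟩ := InGeneralPosition.exists_hasDistinctSimplexVolumes hgen
    (by omega) fun m hm => (add_two_mul_mul_pow_lt (by omega) (by omega) hm.le).trans_le (hP ▸ hn)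
  exact ⟨S, hSP, hS.ge, hdist⟩
end
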